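/- For any α > 0 and any z in the upper half plane ℍ, the theta function θ(α; z) is invariant under the transformations z ↦ z+1, z ↦ −1/z, and z ↦ −z̄ (conjugation composed with negation): θ(α; z+1) = θ(α; z), θ(α; −1/z) = θ(α; z), and θ(α; −z̄) = θ(α; z). -/

import Mathlib

open Real

/-- The two-dimensional theta function `θ(α; z) = Σ_{(m,n)∈ℤ²} exp(−(απ/y)|mz+n|²)`. -/
noncomputable def theta (α : ℝ) (z : ℂ) : ℝ :=
  ∑' p : ℤ × ℤ, Real.exp (-(α * π / z.im) * ‖(p.1 : ℂ) * z + (p.2 : ℂ)‖ ^ 2)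

/-! Each of the three maps replaces the lattice `ℤ z + ℤ` by a rescaled copy of itself, up to
conjugation, and rescales `Im z` by the same factor as `|m z + n|²`. So the normalized form
`|m z + n|² / Im z` is only reindexed by a bijection of `ℤ²`, and so is the theta series. -/

noncomputable def latticeForm (z : ℂ) (p : ℤ × ℤ) : ℝ :=
  ‖(p.1 : ℂ) * z + p.2‖ ^ 2 / z.im

theorem theta_eq_tsum_latticeForm (α : ℝ) (z : ℂ) :
    theta α z = ∑' p : ℤ × ℤ, exp (-(α * π) * latticeForm z p) := by
  unfold theta latticeForm
  congr! 3
  ring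

theorem theta_eq_of_latticeForm_eq (α : ℝ) {w z : ℂ} (e : ℤ × ℤ ≃ ℤ × ℤ)
    (h : ∀ p, latticeForm w p = latticeForm z (e p)) : theta α w = theta α z := by
  simp only [theta_eq_tsum_latticeForm, h]
  exact e.tsum_eq fun p => exp (-(α * π) * latticeForm z p)

theorem latticeForm_add_one (z : ℂ) (p : ℤ × ℤ) :
    latticeForm (z + 1) p = latticeForm z (p.1, p.1 + p.2) := by
  have hval : (p.1 : ℂ) * (z + 1) + p.2 = (p.1 : ℂ) * z + ((p.1 + p.2 : ℤ) : ℂ) := by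
    push_cast
    ring
  unfold latticeForm
  rw [hval, Complex.add_im, Complex.one_im, add_zero]

theorem latticeForm_neg_inv {z : ℂ} (hz : z ≠ 0) (p : ℤ × ℤ) :
    latticeForm (-1 / z) p = latticeForm z (p.2, -p.1) := by
  have him : (-1 / z).im = z.im / ‖z‖ ^ 2 := by
    rw [div_eq_mul_inv, neg_one_mul, Complex.neg_im, Complex.inv_im, Complex.normSq_eq_norm_sq]
    ring
  have hval : (p.1 : ℂ) * (-1 / z) + p.2 = ((p.2 : ℂ) * z + ((-p.1 : ℤ) : ℂ)) / z := by
    field_simp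
    push_cast
    ring
  have hnorm : ‖z‖ ≠ 0 := norm_ne_zero_iff.mpr hz
  unfold latticeForm
  rw [him, hval, norm_div, div_pow]
  field_simp

theorem latticeForm_neg_conj (z : ℂ) (p : ℤ × ℤ) :
    latticeForm (-(starRingEnd ℂ z)) p = latticeForm z (-p.1, p.2) := by
  have hval : (p.1 : ℂ) * -(starRingEnd ℂ z) + p.2 =
      starRingEnd ℂ (((-p.1 : ℤ) : ℂ) * z + p.2) := by
    simp
  unfold latticeForm
  rw [hval, Complex.norm_conj, Complex.neg_im, Complex.conj_im, neg_neg]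

theorem theta_invariance (α : ℝ) (z : ℂ) (hz : 0 < z.im) :
    theta α (z + 1) = theta α z ∧
    theta α (-1 / z) = theta α z ∧
    theta α (-(starRingEnd ℂ z)) = theta α z := by
  have hz0 : z ≠ 0 := fun h => by simp [h] at hz
  refine ⟨?_, ?_, ?_⟩
  · exact theta_eq_of_latticeForm_eq α
      (Equiv.prodShear (Equiv.refl ℤ) Equiv.addLeft) (latticeForm_add_one z)
  · exact theta_eq_of_latticeForm_eq α
      ((Equiv.prodComm ℤ ℤ).trans ((Equiv.refl ℤ).prodCongr (Equiv.neg ℤ)))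
      (latticeForm_neg_inv hz0)
  · exact theta_eq_of_latticeForm_eq α
      ((Equiv.neg ℤ).prodCongr (Equiv.refl ℤ)) (latticeForm_neg_conj z)
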